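/- arXiv:2202.07307 — 2 statements merged into one kernel-verified Lean document; each statement's English description precedes it below -/
import Mathlib

section
/- A finite simplicial complex K of dimension n has first structure vector equal to the all-ones vector (i.e., exactly one q-connected component of K_q for each 0 ≤ q ≤ n) if and only if K is the full n-dimensional simplex on n+1 vertices (together with all its faces). -/
/-- A finite abstract simplicial complex: a set of nonempty finite sets of
vertices, closed under taking nonempty subsets. -/
def IsComplex {V : Type*} (K : Set (Finset V)) : Prop :=
  ∀ σ ∈ K, σ.Nonempty ∧ ∀ τ : Finset V, τ ⊆ σ → τ.Nonempty → τ ∈ K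

/-- Two simplices of `K` are `q`-near if they share a common `q`-dimensional
face (a face with `q+1` vertices). -/
def qNear {V : Type*} (K : Set (Finset V)) (q : ℕ) (σ τ : Finset V) : Prop :=
  σ ∈ K ∧ τ ∈ K ∧ ∃ α ∈ K, α.card = q + 1 ∧ α ⊆ σ ∧ α ⊆ τ

/-- `σ` and `τ` are `q`-connected if there is a finite sequence of simplices
from `σ` to `τ` whose consecutive members are `q`-near. -/
def qConnected {V : Type*} (K : Set (Finset V)) (q : ℕ) : Finset V → Finset V → Prop :=
  Relation.TransGen (qNear K q)

/-- a finite n-dimensional complex has first structure vector the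
all-ones vector (exactly one q-connected component of K_q for each 0 ≤ q ≤ n)
iff it is the full n-simplex on n+1 vertices together with all its faces. -/
theorem structure_vector_all_ones_iff_simplex {V : Type*} (K : Set (Finset V))
    (hK : IsComplex K) (hfin : K.Finite) (n : ℕ)
    (hdim_top : ∃ σ ∈ K, σ.card = n + 1)
    (hdim_le : ∀ σ ∈ K, σ.card ≤ n + 1) :
    (∀ q ≤ n, ∀ σ ∈ K, ∀ τ ∈ K, q + 1 ≤ σ.card → q + 1 ≤ τ.card →
        qConnected K q σ τ) ↔
      ∃ S : Finset V, S.card = n + 1 ∧ K = {σ : Finset V | σ.Nonempty ∧ σ ⊆ S} := by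
  constructor
  · intro h
    obtain ⟨S, hS, hScard⟩ := hdim_top
    refine ⟨S, hScard, ?_⟩
    -- single step at top level forces equality
    have topstep : ∀ a b : Finset V, qNear K n a b → a = b := by
      rintro a b ⟨ha, hb, α, hα, hαc, hαa, hαb⟩
      have h1 : α = a := Finset.eq_of_subset_of_card_le hαa (by rw [hαc]; exact hdim_le a ha)
      have h2 : α = b := Finset.eq_of_subset_of_card_le hαb (by rw [hαc]; exact hdim_le b hb)
      rw [← h1, ← h2]
    have key : ∀ d : ℕ, ∀ σ ∈ K, n + 1 ≤ σ.card + d → σ ⊆ S := by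
      intro d
      induction d with
      | zero =>
        intro σ hσ hc
        have hcon : Relation.TransGen (qNear K n) σ S :=
          h n le_rfl σ hσ S hS (by omega) (by rw [hScard])
        have : σ = S := by
          clear hc hσ
          induction hcon with
          | single hstep => exact topstep _ _ hstep
          | tail _ hstep ih =>
            obtain ⟨hb, hc, α, hα, hαc, hαb, hαc'⟩ := hstep
            have hbc : Finset.card α ≤ Finset.card _ := Finset.card_le_card hαb
            rw [ih hb (le_antisymm (hdim_le _ hb) (by omega)),
              topstep _ _ ⟨hb, hc, α, hα, hαc, hαb, hαc'⟩]
        rw [this]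
      | succ d ih =>
        intro σ hσ hc
        by_cases hbig : n + 1 ≤ σ.card + d
        · exact ih σ hσ hbig
        · have hpos : 1 ≤ σ.card := Finset.card_pos.mpr (hK σ hσ).1
          have hcard : σ.card + d = n := by omega
          set q := σ.card - 1 with hq
          have hqn : q ≤ n := by omega
          have hcon : Relation.TransGen (qNear K q) σ S :=
            h q hqn σ hσ S hS (by omega) (by omega)
          -- single step lemma at level q
          have step : ∀ a b : Finset V, qNear K q a b → b ⊆ S → a ⊆ S := by
            rintro a b ⟨ha, hb, α, hα, hαc, hαa, hαb⟩ hbS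
            by_cases h2 : n + 1 ≤ a.card + d
            · exact ih a ha h2
            · have : α = a := Finset.eq_of_subset_of_card_le hαa (by omega)
              rw [← this]
              exact hαb.trans hbS
          refine Relation.TransGen.head_induction_on (motive := fun a _ => a ⊆ S) hcon
            (fun {a} hstep => step a S hstep subset_rfl)
            (fun {a c} hstep _ hcS => step a c hstep hcS)
    ext σ
    constructor
    · intro hσ
      exact ⟨(hK σ hσ).1, key (n + 1) σ hσ (by omega)⟩
    · rintro ⟨hne, hsub⟩
      exact (hK S hS).2 σ hsub hne
  · rintro ⟨S, hScard, rfl⟩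
    intro q hq σ hσ τ hτ hσc hτc
    obtain ⟨hσne, hσS⟩ := hσ
    obtain ⟨hτne, hτS⟩ := hτ
    have hSK : S ∈ {σ : Finset V | σ.Nonempty ∧ σ ⊆ S} :=
      ⟨Finset.card_pos.mp (by omega), subset_rfl⟩
    obtain ⟨α, hαsub, hαc⟩ := Finset.exists_subset_card_eq hσc
    obtain ⟨β, hβsub, hβc⟩ := Finset.exists_subset_card_eq hτc
    have hαK : α ∈ {σ : Finset V | σ.Nonempty ∧ σ ⊆ S} :=
      ⟨Finset.card_pos.mp (by omega), hαsub.trans hσS⟩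
    have hβK : β ∈ {σ : Finset V | σ.Nonempty ∧ σ ⊆ S} :=
      ⟨Finset.card_pos.mp (by omega), hβsub.trans hτS⟩
    exact Relation.TransGen.head
      ⟨⟨hσne, hσS⟩, hSK, α, hαK, hαc, hαsub, hαsub.trans hσS⟩
      (Relation.TransGen.single ⟨hSK, ⟨hτne, hτS⟩, β, hβK, hβc, hβsub.trans hτS, hβsub⟩)
end

section
/- Let K be an n-pseudomanifold along (d̂_i, d̂_j), with or without boundary, and let G be the subgraph of the (n−1, d̂_i, d̂_j)-nearness digraph induced by the n-simplices. Then the directed flag complex of G contains no 2-simplex; i.e., it is at most 1-dimensional. -/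
/-- A finite ordered simplicial complex: a set of nonempty duplicate-free
lists of vertices (ordered simplices), closed under taking nonempty ordered
subsets (sublists). -/
def IsOrderedComplex {V : Type*} (K : Set (List V)) : Prop :=
  ∀ σ ∈ K, σ ≠ [] ∧ σ.Nodup ∧ ∀ τ : List V, τ.Sublist σ → τ ≠ [] → τ ∈ K

/-- The modified face map d̂_i: delete the vertex of the ordered simplex at
position min(i, dim σ), i.e. at position min(i, length − 1). -/
def hatD {V : Type*} (i : ℕ) (σ : List V) : List V :=
  σ.eraseIdx (min i (σ.length - 1))

/-- The ordered pair (σ, τ) is q-near along (d̂_i, d̂_j): both are simplices of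
`K` of dimension ≥ q, and either σ is a face of τ, or some q-simplex α of `K`
is a common face of d̂_i(σ) and d̂_j(τ). -/
def dqNear {V : Type*} (K : Set (List V)) (q i j : ℕ) (σ τ : List V) : Prop :=
  σ ∈ K ∧ τ ∈ K ∧ q + 1 ≤ σ.length ∧ q + 1 ≤ τ.length ∧
    (σ.Sublist τ ∨
      ∃ α ∈ K, α.length = q + 1 ∧ α.Sublist (hatD i σ) ∧ α.Sublist (hatD j τ))

/-- The ordered pair (σ, τ) is (q, d̂_i, d̂_j)-connected: there is a finite
sequence from σ to τ whose consecutive ordered pairs are q-near along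
(d̂_i, d̂_j). -/
def dqConnected {V : Type*} (K : Set (List V)) (q i j : ℕ) :
    List V → List V → Prop :=
  Relation.TransGen (dqNear K q i j)

/-- An n-pseudomanifold along (d̂_i, d̂_j) with boundary: all maximal simplices
are n-simplices, each (n−1)-simplex is a face of at most two n-simplices, and
any two n-simplices are (n−1, d̂_i, d̂_j)-connected. -/
def IsDirPseudomanifoldWithBoundary {V : Type*} (K : Set (List V)) (n i j : ℕ) : Prop :=
  IsOrderedComplex K ∧
  (∀ σ ∈ K, (∀ τ ∈ K, σ.Sublist τ → τ = σ) → σ.length = n + 1) ∧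
  (∀ α ∈ K, α.length = n → {σ | σ ∈ K ∧ σ.length = n + 1 ∧ α.Sublist σ}.ncard ≤ 2) ∧
  (∀ σ ∈ K, ∀ τ ∈ K, σ.length = n + 1 → τ.length = n + 1 →
    dqConnected K (n - 1) i j σ τ)

/-- The edge relation of the subgraph of the (n−1, d̂_i, d̂_j)-nearness digraph
induced by the n-simplices. -/
def pmEdge {V : Type*} (K : Set (List V)) (n i j : ℕ) (σ τ : List V) : Prop :=
  σ ≠ τ ∧ σ.length = n + 1 ∧ τ.length = n + 1 ∧ dqNear K (n - 1) i j σ τ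

lemma pmEdge_face {V : Type*} {K : Set (List V)} {n i j : ℕ} (hn : 1 ≤ n)
    {σ τ : List V} (h : pmEdge K n i j σ τ) :
    ∃ α ∈ K, α.length = n ∧ α = hatD i σ ∧ α.Sublist σ ∧ α.Sublist τ := by
  obtain ⟨hne, hσl, hτl, _, _, _, _, hor⟩ := h
  rcases hor with hsub | ⟨α, hαK, hαl, hα1, hα2⟩
  · exact absurd (hsub.eq_of_length (by omega)) hne
  · have hαl' : α.length = n := by omega
    have hlen1 : (hatD i σ).length = n := by
      have : min i (σ.length - 1) < σ.length := by omega
      simp [hatD, List.length_eraseIdx, this, hσl]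
    have hαeq : α = hatD i σ := hα1.eq_of_length (by omega)
    refine ⟨α, hαK, hαl', hαeq, ?_, hα2.trans (List.eraseIdx_sublist _ _)⟩
    exact hαeq ▸ List.eraseIdx_sublist _ _

/-- for an n-pseudomanifold along (d̂_i, d̂_j) (with or without
boundary), the directed flag complex of the subgraph of the
(n−1, d̂_i, d̂_j)-nearness digraph induced by the n-simplices contains no
2-simplex, i.e. it is at most 1-dimensional. -/
theorem dir_pseudomanifold_graph_one_dim {V : Type*} (K : Set (List V))
    (n i j : ℕ) (hn : 1 ≤ n) (hfin : K.Finite)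
    (hPM : IsDirPseudomanifoldWithBoundary K n i j) :
    ¬ ∃ σ τ κ : List V, pmEdge K n i j σ τ ∧ pmEdge K n i j τ κ ∧
        pmEdge K n i j σ κ := by
  rintro ⟨σ, τ, κ, h1, h2, h3⟩
  obtain ⟨α, hαK, hαl, hαeq, hασ, hατ⟩ := pmEdge_face hn h1
  obtain ⟨β, hβK, hβl, hβeq, hβσ, hβκ⟩ := pmEdge_face hn h3
  have hβα : β = α := hβeq.trans hαeq.symm
  subst hβα
  have hσK : σ ∈ K := h1.2.2.2.1
  have hτK : τ ∈ K := h1.2.2.2.2.1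
  have hκK : κ ∈ K := h3.2.2.2.2.1
  set S : Set (List V) := {σ' | σ' ∈ K ∧ σ'.length = n + 1 ∧ β.Sublist σ'} with hS
  have hcard : S.ncard ≤ 2 := hPM.2.2.1 β hβK hβl
  have hsub : ({σ, τ, κ} : Set (List V)) ⊆ S := by
    rintro x (rfl | rfl | rfl)
    · exact ⟨hσK, h1.2.1, hβσ⟩
    · exact ⟨hτK, h1.2.2.1, hατ⟩
    · exact ⟨hκK, h3.2.2.1, hβκ⟩
  have hSfin : S.Finite := hfin.subset (fun x hx => hx.1)
  have h3card : ({σ, τ, κ} : Set (List V)).ncard = 3 := by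
    rw [Set.ncard_insert_of_notMem (by simp [h1.1, h3.1]) (by
      exact (Set.finite_singleton κ).insert τ),
      Set.ncard_insert_of_notMem (by simp [h2.1]) (Set.finite_singleton κ),
      Set.ncard_singleton]
  have := Set.ncard_le_ncard hsub hSfin
  omega
end
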